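/- Let S and r be parameters with 0 < S < 4r. If u and v are two twice continuously differentiable functions ℝ → ℝ that both satisfy w''(x) + S·f(w(x)) + (2S/r)(2w(x)−1)(w'(x))² = 0 for all x ∈ ℝ, with lim_{x→−∞} w(x) = 1, lim_{x→+∞} w(x) = 0, and the normalization u(0) = v(0) = 1/2, then u(x) = v(x) for all x ∈ ℝ. -/

import Mathlib

open Real Filter Topology Set Metric intervalIntegral


noncomputable def fpoly (u : ℝ) : ℝ := u * (2 * u - 1) * (1 - u)

noncomputable def Pf (S r s : ℝ) : ℝ := Real.exp ((4*S/r) * (s^2 - s))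
noncomputable def Qf (S r s : ℝ) : ℝ := 2 * S * Pf S r s * fpoly s
noncomputable def Psi (S r s : ℝ) : ℝ := ∫ t in (0:ℝ)..s, Qf S r t

lemma fpoly_contDiff : ContDiff ℝ (⊤ : ℕ∞) fpoly := by unfold fpoly; fun_prop

lemma Pf_pos (S r s : ℝ) : 0 < Pf S r s := Real.exp_pos _

lemma Pf_contDiff (S r : ℝ) : ContDiff ℝ (⊤ : ℕ∞) (Pf S r) := by unfold Pf; fun_prop

lemma Qf_cont (S r : ℝ) : Continuous (Qf S r) := by
  unfold Qf Pf fpoly; fun_prop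

lemma Pf_hasDeriv (S r s : ℝ) :
    HasDerivAt (Pf S r) ((4*S/r) * (2*s - 1) * Pf S r s) s := by
  have h : HasDerivAt (fun t : ℝ => (4*S/r) * (t^2 - t)) ((4*S/r) * (2*s - 1)) s := by
    have := ((hasDerivAt_pow 2 s).sub (hasDerivAt_id s)).const_mul (4*S/r)
    simpa using this.congr_deriv (by ring)
  have h2 := h.exp
  unfold Pf
  exact h2.congr_deriv (by ring)

lemma Psi_hasDeriv (S r s : ℝ) : HasDerivAt (Psi S r) (Qf S r s) s :=
  ((Qf_cont S r).integral_hasStrictDerivAt 0 s).hasDerivAt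

lemma Psi_cont (S r : ℝ) : Continuous (Psi S r) :=
  continuous_iff_continuousAt.2 fun s => (Psi_hasDeriv S r s).continuousAt

lemma Psi_zero (S r : ℝ) : Psi S r 0 = 0 := intervalIntegral.integral_same

-- basic consequences of ContDiff 2
lemma cd2_diff {w : ℝ → ℝ} (hw : ContDiff ℝ 2 w) : Differentiable ℝ w :=
  hw.differentiable two_ne_zero

lemma cd2_deriv {w : ℝ → ℝ} (hw : ContDiff ℝ 2 w) : ContDiff ℝ 1 (deriv w) := by
  have h2 : ContDiff ℝ ((1:ℕ∞)+1) w := by exact_mod_cast hw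
  exact_mod_cast (contDiff_succ_iff_deriv.mp h2).2.2

lemma energy_hasDeriv {S r : ℝ} {w : ℝ → ℝ} (hw : ContDiff ℝ 2 w)
    (hode : ∀ x : ℝ, deriv (deriv w) x + S * fpoly (w x)
      + (2 * S / r) * (2 * w x - 1) * (deriv w x) ^ 2 = 0) (x : ℝ) :
    HasDerivAt (fun y => Pf S r (w y) * (deriv w y)^2 + Psi S r (w y)) 0 x := by
  have hw1 : HasDerivAt w (deriv w x) x := ((cd2_diff hw) x).hasDerivAt
  have hw2 : HasDerivAt (deriv w) (deriv (deriv w) x) x :=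
    (((cd2_deriv hw).differentiable one_ne_zero) x).hasDerivAt
  have hP := (Pf_hasDeriv S r (w x)).comp x hw1
  have hΨ := (Psi_hasDeriv S r (w x)).comp x hw1
  have hsq : HasDerivAt (fun y => (deriv w y)^2) (2 * deriv w x * deriv (deriv w) x) x := by
    simpa using hw2.fun_pow 2
  have hE := (hP.mul hsq).add hΨ
  have hode' : deriv (deriv w) x =
      -(S * fpoly (w x)) - (2 * S / r) * (2 * w x - 1) * (deriv w x) ^ 2 := by
    linarith [hode x]
  refine hE.congr_deriv ?_
  rw [hode']
  simp only [Function.comp, Qf]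
  ring

/-- a sequence going to +infty where the derivative goes to 0 -/
lemma exists_seq_deriv_small_atTop {w : ℝ → ℝ} (hw : ContDiff ℝ 2 w) {L : ℝ}
    (hlim : Tendsto w atTop (𝓝 L)) :
    ∃ c : ℕ → ℝ, Tendsto (fun n => w (c n)) atTop (𝓝 L) ∧
      Tendsto (fun n => deriv w (c n)) atTop (𝓝 0) := by
  have key : ∀ n : ℕ, ∃ c ∈ Ioo (n:ℝ) ((n:ℝ)+1), deriv w c = (w ((n:ℝ)+1) - w n) / (((n:ℝ)+1) - n) := by
    intro n
    exact exists_deriv_eq_slope w (by linarith) (hw.continuous.continuousOn)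
      ((cd2_diff hw).differentiableOn)
  choose c hc hderiv using key
  have hctop : Tendsto c atTop atTop :=
    tendsto_atTop_mono (fun n => (hc n).1.le) tendsto_natCast_atTop_atTop
  refine ⟨c, hlim.comp hctop, ?_⟩
  have h1 : Tendsto (fun n : ℕ => w ((n:ℝ)+1) - w n) atTop (𝓝 (L - L)) :=
    (hlim.comp (tendsto_natCast_atTop_atTop.atTop_add tendsto_const_nhds)).sub
      (hlim.comp tendsto_natCast_atTop_atTop)
  rw [sub_self] at h1
  refine h1.congr fun n => ?_
  rw [hderiv n]
  field_simp
  ring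

lemma exists_seq_deriv_small_atBot {w : ℝ → ℝ} (hw : ContDiff ℝ 2 w) {L : ℝ}
    (hlim : Tendsto w atBot (𝓝 L)) :
    ∃ c : ℕ → ℝ, Tendsto (fun n => w (c n)) atTop (𝓝 L) ∧
      Tendsto (fun n => deriv w (c n)) atTop (𝓝 0) := by
  have key : ∀ n : ℕ, ∃ c ∈ Ioo (-(n:ℝ)-1) (-(n:ℝ)),
      deriv w c = (w (-(n:ℝ)) - w (-(n:ℝ)-1)) / ((-(n:ℝ)) - (-(n:ℝ)-1)) := by
    intro n
    exact exists_deriv_eq_slope w (by linarith) (hw.continuous.continuousOn)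
      ((cd2_diff hw).differentiableOn)
  choose c hc hderiv using key
  have hcbot : Tendsto c atTop atBot := by
    apply tendsto_atBot_mono (fun n => (hc n).2.le)
    exact tendsto_neg_atBot_iff.mpr tendsto_natCast_atTop_atTop
  refine ⟨c, hlim.comp hcbot, ?_⟩
  have hbot1 : Tendsto (fun n : ℕ => -(n:ℝ)) atTop atBot :=
    tendsto_neg_atBot_iff.mpr tendsto_natCast_atTop_atTop
  have hbot2 : Tendsto (fun n : ℕ => -(n:ℝ)-1) atTop atBot := hbot1.atBot_add tendsto_const_nhds
  have h1 : Tendsto (fun n : ℕ => w (-(n:ℝ)) - w (-(n:ℝ)-1)) atTop (𝓝 (L - L)) :=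
    (hlim.comp hbot1).sub (hlim.comp hbot2)
  rw [sub_self] at h1
  refine h1.congr fun n => ?_
  rw [hderiv n]
  field_simp
  ring

lemma energy_zero {S r : ℝ} {w : ℝ → ℝ} (hw : ContDiff ℝ 2 w)
    (hode : ∀ x : ℝ, deriv (deriv w) x + S * fpoly (w x)
      + (2 * S / r) * (2 * w x - 1) * (deriv w x) ^ 2 = 0)
    (hlim0 : Tendsto w atTop (𝓝 0)) (hlim1 : Tendsto w atBot (𝓝 1)) :
    (∀ x, Pf S r (w x) * (deriv w x)^2 + Psi S r (w x) = 0) ∧ Psi S r 1 = 0 := by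
  set E := fun y => Pf S r (w y) * (deriv w y)^2 + Psi S r (w y) with hE
  have hconst : ∀ x y, E x = E y := by
    apply is_const_of_deriv_eq_zero
    · exact fun x => (energy_hasDeriv hw hode x).differentiableAt
    · exact fun x => (energy_hasDeriv hw hode x).deriv
  have hlimE : ∀ (l : Filter ℝ) (c : ℕ → ℝ) (L : ℝ), Tendsto (fun n => w (c n)) atTop (𝓝 L) →
      Tendsto (fun n => deriv w (c n)) atTop (𝓝 0) → E 0 = Psi S r L := by
    intro l c L hwc hdc
    have hEc : Tendsto (fun n => E (c n)) atTop (𝓝 (Pf S r L * 0^2 + Psi S r L)) := by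
      exact ((((Pf_contDiff S r).continuous.tendsto L).comp hwc).mul (hdc.pow 2)).add
        (((Psi_cont S r).tendsto L).comp hwc)
    have hEc' : Tendsto (fun n => E (c n)) atTop (𝓝 (E 0)) := by
      simpa using tendsto_const_nhds.congr (fun n => (hconst 0 (c n)))
    have := tendsto_nhds_unique hEc' hEc
    simpa using this
  obtain ⟨c0, hc0w, hc0d⟩ := exists_seq_deriv_small_atTop hw hlim0
  obtain ⟨c1, hc1w, hc1d⟩ := exists_seq_deriv_small_atBot hw hlim1
  have h0 : E 0 = Psi S r 0 := hlimE atTop c0 0 hc0w hc0d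
  have h1 : E 0 = Psi S r 1 := hlimE atBot c1 1 hc1w hc1d
  rw [Psi_zero] at h0
  constructor
  · intro x; show E x = 0; rw [hconst x 0, h0]
  · rw [← h1, h0]

lemma Psi_neg {S r : ℝ} (hS : 0 < S) (hΨ1 : Psi S r 1 = 0) :
    ∀ s ∈ Ioo (0:ℝ) 1, Psi S r s < 0 := by
  have hint : ∀ a b : ℝ, IntervalIntegrable (Qf S r) MeasureTheory.volume a b :=
    fun a b => (Qf_cont S r).intervalIntegrable a b
  intro s hs
  rcases le_or_gt s (1/2) with hhalf | hhalf
  · have hpos : 0 < ∫ t in (0:ℝ)..s, -Qf S r t := by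
      apply intervalIntegral_pos_of_pos_on ((hint 0 s).neg) _ hs.1
      intro t ht
      have hP := Pf_pos S r t
      have h1 : 0 < t := ht.1
      have h3 : 0 < 1 - t := by cases ht; cases hs; linarith
      have h2 : 2*t - 1 < 0 := by cases ht; linarith
      have hf : fpoly t < 0 := by
        unfold fpoly; nlinarith [mul_neg_of_pos_of_neg (mul_pos h1 h3) h2]
      show 0 < -(2 * S * Pf S r t * fpoly t)
      nlinarith [mul_pos (mul_pos (mul_pos two_pos hS) hP) (neg_pos.mpr hf)]
    rw [intervalIntegral.integral_neg] at hpos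
    unfold Psi; linarith
  · have hadd : Psi S r s + ∫ t in s..(1:ℝ), Qf S r t = Psi S r 1 :=
      intervalIntegral.integral_add_adjacent_intervals (hint 0 s) (hint s 1)
    have hpos : 0 < ∫ t in s..(1:ℝ), Qf S r t := by
      apply intervalIntegral_pos_of_pos_on (hint s 1) _ hs.2
      intro t ht
      have hP := Pf_pos S r t
      have h1 : 0 < t := by cases ht; linarith
      have h3 : 0 < 1 - t := by cases ht; linarith
      have h2 : 0 < 2*t - 1 := by cases ht; linarith
      have hf : 0 < fpoly t := by
        unfold fpoly; nlinarith [mul_pos (mul_pos h1 h2) h3]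
      exact mul_pos (mul_pos (by linarith : (0:ℝ) < 2*S) hP) hf
    linarith

lemma bdd_of_tendsto {w : ℝ → ℝ} (hc : Continuous w) {L0 L1 : ℝ}
    (h0 : Tendsto w atTop (𝓝 L0)) (h1 : Tendsto w atBot (𝓝 L1)) :
    ∃ K, ∀ x, |w x| ≤ K := by
  have e0 : ∀ᶠ x in atTop, |w x - L0| < 1 := by
    have := Metric.tendsto_nhds.mp h0 1 one_pos
    simpa [Real.dist_eq] using this
  have e1 : ∀ᶠ x in atBot, |w x - L1| < 1 := by
    have := Metric.tendsto_nhds.mp h1 1 one_pos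
    simpa [Real.dist_eq] using this
  obtain ⟨X1, hX1⟩ := eventually_atTop.mp e0
  obtain ⟨X0, hX0⟩ := eventually_atBot.mp e1
  obtain ⟨K0, hK0⟩ := (isCompact_Icc (a := X0) (b := X1)).exists_bound_of_continuousOn
    hc.continuousOn
  refine ⟨max K0 (max (|L0| + 1) (|L1| + 1)), fun x => ?_⟩
  by_cases hxl : x ≤ X0
  · have := hX0 x hxl
    have : |w x| ≤ |L1| + 1 := by
      have := abs_sub_abs_le_abs_sub (w x) L1
      linarith
    exact le_trans this (le_trans (le_max_right _ _) (le_max_right _ _))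
  · by_cases hxr : X1 ≤ x
    · have := hX1 x hxr
      have : |w x| ≤ |L0| + 1 := by
        have := abs_sub_abs_le_abs_sub (w x) L0
        linarith
      exact le_trans this (le_trans (le_max_left _ _) (le_max_right _ _))
    · push_neg at hxl hxr
      have := hK0 x ⟨hxl.le, hxr.le⟩
      rw [Real.norm_eq_abs] at this
      exact le_trans this (le_max_left _ _)

/-- The uniqueness engine: two bounded solutions with matching value and derivative at `x₀`
agree everywhere. -/
lemma ode_uniq {S r : ℝ} {w₁ w₂ : ℝ → ℝ} (h1 : ContDiff ℝ 2 w₁) (h2 : ContDiff ℝ 2 w₂)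
    (hode1 : ∀ x : ℝ, deriv (deriv w₁) x + S * fpoly (w₁ x)
      + (2 * S / r) * (2 * w₁ x - 1) * (deriv w₁ x) ^ 2 = 0)
    (hode2 : ∀ x : ℝ, deriv (deriv w₂) x + S * fpoly (w₂ x)
      + (2 * S / r) * (2 * w₂ x - 1) * (deriv w₂ x) ^ 2 = 0)
    {R : ℝ}
    (hb1 : ∀ x, |w₁ x| ≤ R ∧ |deriv w₁ x| ≤ R)
    (hb2 : ∀ x, |w₂ x| ≤ R ∧ |deriv w₂ x| ≤ R)
    {x₀ : ℝ} (he : w₁ x₀ = w₂ x₀) (he' : deriv w₁ x₀ = deriv w₂ x₀) :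
    ∀ x, w₁ x = w₂ x := by
  classical
  set V : ℝ × ℝ → ℝ × ℝ :=
    fun p => (p.2, -(S * fpoly p.1) - (2 * S / r) * (2 * p.1 - 1) * p.2 ^ 2) with hV
  have hVc : ContDiff ℝ (⊤ : ℕ∞) V := by
    apply ContDiff.prodMk
    · exact contDiff_snd
    · unfold fpoly; fun_prop
  have hR0 : 0 ≤ R := le_trans (abs_nonneg _) (hb1 0).1
  set s : Set (ℝ × ℝ) := Metric.closedBall 0 (R + 1) with hs
  have hsc : IsCompact s := isCompact_closedBall _ _
  have hfc : Continuous (fderiv ℝ V) := hVc.continuous_fderiv (by simp)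
  obtain ⟨C, hC⟩ := hsc.exists_bound_of_continuousOn hfc.continuousOn
  have hC0 : 0 ≤ C := le_trans (norm_nonneg _)
    (hC 0 (by simp [hs]; linarith))
  set K : NNReal := ⟨C, hC0⟩ with hK
  have hlip : LipschitzOnWith K V s := by
    refine Convex.lipschitzOnWith_of_nnnorm_hasFDerivWithin_le
      (f' := fun x => fderiv ℝ V x)
      (fun x _ => (hVc.differentiable (by simp) x).hasFDerivAt.hasFDerivWithinAt)
      (fun x hx => ?_) (convex_closedBall _ _)
    rw [← NNReal.coe_le_coe, coe_nnnorm]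
    exact hC x hx
  -- the trajectories
  have traj : ∀ (w : ℝ → ℝ), ContDiff ℝ 2 w →
      (∀ x : ℝ, deriv (deriv w) x + S * fpoly (w x)
        + (2 * S / r) * (2 * w x - 1) * (deriv w x) ^ 2 = 0) →
      (∀ x, |w x| ≤ R ∧ |deriv w x| ≤ R) →
      ∀ t : ℝ, HasDerivAt (fun y => (w y, deriv w y)) (V (w t, deriv w t)) t ∧
        (w t, deriv w t) ∈ s := by
    intro w hw hode hb t
    have hd : Differentiable ℝ w := hw.differentiable two_ne_zero
    have hd2 : Differentiable ℝ (deriv w) := by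
      have h2 : ContDiff ℝ ((1:ℕ∞)+1) w := by exact_mod_cast hw
      exact ((contDiff_succ_iff_deriv.mp h2).2.2).differentiable one_ne_zero
    constructor
    · apply HasDerivAt.prodMk
      · exact (hd t).hasDerivAt
      · have : deriv (deriv w) t =
            -(S * fpoly (w t)) - (2 * S / r) * (2 * w t - 1) * (deriv w t) ^ 2 := by
          linarith [hode t]
        exact this ▸ (hd2 t).hasDerivAt
    · rw [hs, Metric.mem_closedBall, dist_zero_right, Prod.norm_def]
      apply max_le <;> rw [Real.norm_eq_abs]
      · linarith [(hb t).1]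
      · linarith [(hb t).2]
  intro x
  rcases eq_or_ne x x₀ with rfl | hne
  · exact he
  · set a := min x x₀ - 1 with ha
    set b := max x x₀ + 1 with hb
    have hx : x ∈ Ioo a b := by
      constructor
      · have := min_le_left x x₀; simp only [ha]; linarith
      · have := le_max_left x x₀; simp only [hb]; linarith
    have hx₀ : x₀ ∈ Ioo a b := by
      constructor
      · have := min_le_right x x₀; simp only [ha]; linarith
      · have := le_max_right x x₀; simp only [hb]; linarith
    have heq0 : (fun y => (w₁ y, deriv w₁ y)) x₀ = (fun y => (w₂ y, deriv w₂ y)) x₀ := by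
      simp [he, he']
    have := ODE_solution_unique_of_mem_Ioo (v := fun _ p => V p) (s := fun _ => s)
      (fun _ _ => hlip) hx₀ (fun t _ => traj w₁ h1 hode1 hb1 t)
      (fun t _ => traj w₂ h2 hode2 hb2 t) heq0 hx
    exact congrArg Prod.fst this

lemma ode_const (S r c : ℝ) (hc : fpoly c = 0) :
    ∀ x : ℝ, deriv (deriv (fun _ : ℝ => c)) x + S * fpoly ((fun _ : ℝ => c) x)
      + (2 * S / r) * (2 * (fun _ : ℝ => c) x - 1) * (deriv (fun _ : ℝ => c) x) ^ 2 = 0 := by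
  intro x
  simp [hc, deriv_const']

lemma sol_props {S r : ℝ} (hS : 0 < S) {w : ℝ → ℝ} (hw : ContDiff ℝ 2 w)
    (hode : ∀ x : ℝ, deriv (deriv w) x + S * fpoly (w x)
      + (2 * S / r) * (2 * w x - 1) * (deriv w x) ^ 2 = 0)
    (hlim1 : Tendsto w atBot (𝓝 1)) (hlim0 : Tendsto w atTop (𝓝 0))
    (hn : w 0 = 1 / 2) :
    deriv w 0 < 0 ∧ Pf S r (1/2) * (deriv w 0)^2 + Psi S r (1/2) = 0 ∧
      ∃ R, ∀ x, |w x| ≤ R ∧ |deriv w x| ≤ R := by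
  obtain ⟨hen, hΨ1⟩ := energy_zero hw hode hlim0 hlim1
  have hψneg := Psi_neg hS hΨ1
  -- boundedness
  obtain ⟨K, hK⟩ := bdd_of_tendsto hw.continuous hlim0 hlim1
  have hGc : Continuous (fun s => -Psi S r s / Pf S r s) :=
    (Psi_cont S r).neg.div (Pf_contDiff S r).continuous (fun s => (Pf_pos S r s).ne')
  obtain ⟨M, hM⟩ := (isCompact_Icc (a := -K) (b := K)).exists_bound_of_continuousOn
    hGc.continuousOn
  have hsq : ∀ x, (deriv w x)^2 = -Psi S r (w x) / Pf S r (w x) := by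
    intro x
    rw [eq_div_iff (Pf_pos S r (w x)).ne']
    linarith [hen x]
  have hdb : ∀ x, |deriv w x| ≤ Real.sqrt M := by
    intro x
    have h1 : (deriv w x)^2 ≤ M := by
      rw [hsq x]
      have := hM (w x) (abs_le.mp (hK x))
      rw [Real.norm_eq_abs] at this
      exact le_trans (le_abs_self _) this
    rw [← Real.sqrt_sq_eq_abs]
    exact Real.sqrt_le_sqrt h1
  set R : ℝ := max 1 (max K (Real.sqrt M)) with hR
  have hRb : ∀ x, |w x| ≤ R ∧ |deriv w x| ≤ R := fun x =>
    ⟨le_trans (hK x) (le_trans (le_max_left _ _) (le_max_right _ _)),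
     le_trans (hdb x) (le_trans (le_max_right _ _) (le_max_right _ _))⟩
  have hR1 : (1:ℝ) ≤ R := le_max_left _ _
  have hR0 : (0:ℝ) ≤ R := by linarith
  -- w never takes the values 0 and 1
  have hnever : ∀ c : ℝ, fpoly c = 0 → Pf S r c = 1 → Psi S r c = 0 → c ≠ 1/2 →
      ∀ x, w x ≠ c := by
    intro c hfc hPc hΨc hc12 x hxc
    have hd0 : deriv w x = 0 := by
      have h := hen x
      rw [hxc, hPc, hΨc] at h
      have : (deriv w x)^2 = 0 := by linarith
      exact pow_eq_zero_iff (n := 2) (by norm_num) |>.mp this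
    have hcb : ∀ y : ℝ, |(fun _ : ℝ => c) y| ≤ R ∧ |deriv (fun _ : ℝ => c) y| ≤ R := by
      intro y
      constructor
      · simp only [deriv_const']
        calc |c| = |w x| := by rw [hxc]
        _ ≤ R := (hRb x).1
      · simp [deriv_const', hR0]
    have := ode_uniq hw contDiff_const hode (ode_const S r c hfc) hRb hcb
      (x₀ := x) hxc (by simp [deriv_const', hd0]) 0
    rw [hn] at this
    exact hc12 this.symm
  have h0 : ∀ x, w x ≠ 0 := by
    apply hnever 0 (by simp [fpoly]) (by simp [Pf]) (Psi_zero S r) (by norm_num)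
  have h1 : ∀ x, w x ≠ 1 := by
    apply hnever 1 (by simp [fpoly]) (by simp [Pf]) hΨ1 (by norm_num)
  -- hence w stays in (0,1)
  have hio : ∀ x, w x ∈ Ioo (0:ℝ) 1 := by
    intro x
    constructor
    · rcases lt_or_ge 0 (w x) with h | h
      · exact h
      · exfalso
        have hmem : (0:ℝ) ∈ uIcc (w x) (w 0) := by
          rw [hn]; exact mem_uIcc.mpr (Or.inl ⟨h, by norm_num⟩)
        obtain ⟨c, _, hc⟩ := intermediate_value_uIcc
          (hw.continuous.continuousOn (s := uIcc x 0)) hmem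
        exact h0 c hc
    · rcases lt_or_ge (w x) 1 with h | h
      · exact h
      · exfalso
        have hmem : (1:ℝ) ∈ uIcc (w x) (w 0) := by
          rw [hn]; exact mem_uIcc.mpr (Or.inr ⟨by norm_num, h⟩)
        obtain ⟨c, _, hc⟩ := intermediate_value_uIcc
          (hw.continuous.continuousOn (s := uIcc x 0)) hmem
        exact h1 c hc
  -- the derivative never vanishes
  have hdne : ∀ x, deriv w x ≠ 0 := by
    intro x hd
    have h := hen x
    rw [hd] at h
    have : Psi S r (w x) = 0 := by simpa using h
    exact absurd this (ne_of_lt (hψneg (w x) (hio x)))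
  -- derivative is negative somewhere
  obtain ⟨X, hX1, hXlt⟩ : ∃ X : ℝ, 1 ≤ X ∧ w X < 1/2 :=
    ((eventually_ge_atTop 1).and (hlim0.eventually_lt_const (by norm_num : (0:ℝ) < 1/2))).exists
  obtain ⟨c, hcIoo, hcd⟩ := exists_deriv_eq_slope w (by linarith : (0:ℝ) < X)
    hw.continuous.continuousOn (cd2_diff hw).differentiableOn
  have hcneg : deriv w c < 0 := by
    rw [hcd, hn]
    apply div_neg_of_neg_of_pos <;> linarith
  -- derivative negative at 0
  have hd0 : deriv w 0 < 0 := by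
    rcases lt_or_gt_of_ne (hdne 0) with h | h
    · exact h
    · exfalso
      have hmem : (0:ℝ) ∈ uIcc (deriv w c) (deriv w 0) :=
        mem_uIcc.mpr (Or.inl ⟨hcneg.le, h.le⟩)
      obtain ⟨y, _, hy⟩ := intermediate_value_uIcc
        ((cd2_deriv hw).continuous.continuousOn (s := uIcc c 0)) hmem
      exact hdne y hy
  refine ⟨hd0, ?_, R, hRb⟩
  have := hen 0
  rwa [hn] at this

theorem standing_wave_uniqueness (S r : ℝ) (hS : 0 < S) (hSr : S < 4 * r)
    (u v : ℝ → ℝ) (hu : ContDiff ℝ 2 u) (hv : ContDiff ℝ 2 v)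
    (hodeu : ∀ x : ℝ, deriv (deriv u) x + S * fpoly (u x)
      + (2 * S / r) * (2 * u x - 1) * (deriv u x) ^ 2 = 0)
    (hodev : ∀ x : ℝ, deriv (deriv v) x + S * fpoly (v x)
      + (2 * S / r) * (2 * v x - 1) * (deriv v x) ^ 2 = 0)
    (hlimu1 : Tendsto u atBot (𝓝 1)) (hlimu0 : Tendsto u atTop (𝓝 0))
    (hlimv1 : Tendsto v atBot (𝓝 1)) (hlimv0 : Tendsto v atTop (𝓝 0))
    (hnu : u 0 = 1 / 2) (hnv : v 0 = 1 / 2) :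
    ∀ x : ℝ, u x = v x := by
  obtain ⟨hdu, henu, Ru, hRu⟩ := sol_props hS hu hodeu hlimu1 hlimu0 hnu
  obtain ⟨hdv, henv, Rv, hRv⟩ := sol_props hS hv hodev hlimv1 hlimv0 hnv
  have hPpos := Pf_pos S r (1/2)
  have hsq : (deriv u 0)^2 = (deriv v 0)^2 := by
    have h : Pf S r (1/2) * (deriv u 0)^2 = Pf S r (1/2) * (deriv v 0)^2 := by linarith
    exact mul_left_cancel₀ hPpos.ne' h
  have hfac : (deriv u 0 - deriv v 0) * (deriv u 0 + deriv v 0) = 0 := by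
    linear_combination hsq
  have hde : deriv u 0 = deriv v 0 := by
    rcases mul_eq_zero.mp hfac with h | h
    · linarith
    · linarith
  exact ode_uniq hu hv hodeu hodev
    (R := max Ru Rv)
    (fun x => ⟨le_trans (hRu x).1 (le_max_left _ _), le_trans (hRu x).2 (le_max_left _ _)⟩)
    (fun x => ⟨le_trans (hRv x).1 (le_max_right _ _), le_trans (hRv x).2 (le_max_right _ _)⟩)
    (x₀ := 0) (hnu.trans hnv.symm) hde
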